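/- Let Φ₀ be a strictly plurisubharmonic real quadratic form on ℂⁿ with Hermitian part Φ₀ʰᵉʳᵐ, let f be the holomorphic quadratic form with Φ₀ = Φ₀ʰᵉʳᵐ + Re f, and let 𝒰 : H_{Φ₀}(ℂⁿ) → H_{Φ₀ʰᵉʳᵐ}(ℂⁿ), 𝒰u = e^{−f}u, be the associated unitary map. Let q be a complex-valued inhomogeneous quadratic polynomial on ℂⁿ. Then Π_{Φ₀ʰᵉʳᵐ} ∘ e^q ∘ Π_{Φ₀ʰᵉʳᵐ} = 𝒰 ∘ (Π_{Φ₀} ∘ e^q ∘ Π_{Φ₀}) ∘ 𝒰⁻¹ (as densely defined operators, with 𝒰 mapping the maximal domain of Top(e^q) on H_{Φ₀}(ℂⁿ) bijectively onto that of Π_{Φ₀ʰᵉʳᵐ} ∘ e^q ∘ Π_{Φ₀ʰᵉʳᵐ} on H_{Φ₀ʰᵉʳᵐ}(ℂⁿ)). Consequently, Top(e^q) is bounded on H_{Φ₀}(ℂⁿ) if and only if Π_{Φ₀ʰᵉʳᵐ} ∘ e^q ∘ Π_{Φ₀ʰᵉʳᵐ} is bounded on H_{Φ₀ʰᵉʳᵐ}(ℂⁿ).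 -/

import Mathlib

open MeasureTheory Complex
open scoped ComplexOrder

noncomputable section

namespace BergerCoburn

variable {n : ℕ}

/-- Membership in the weighted space `L²(ℂⁿ, e^{-2Φ} L(dx))`. -/
def MemL2 (Φ : (Fin n → ℂ) → ℝ) (u : (Fin n → ℂ) → ℂ) : Prop :=
  Integrable (fun x => ‖u x‖ ^ 2 * Real.exp (-2 * Φ x))

/-- The squared weighted `L²` norm. -/
def wNormSq (Φ : (Fin n → ℂ) → ℝ) (u : (Fin n → ℂ) → ℂ) : ℝ :=
  ∫ x, ‖u x‖ ^ 2 * Real.exp (-2 * Φ x)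

/-- The weighted `L²` inner product. -/
def wInner (Φ : (Fin n → ℂ) → ℝ) (u v : (Fin n → ℂ) → ℂ) : ℂ :=
  ∫ x, u x * (starRingEnd ℂ) (v x) * (Real.exp (-2 * Φ x) : ℂ)

/-- Membership in the Bargmann space `H_Φ(ℂⁿ)`. -/
def MemH (Φ : (Fin n → ℂ) → ℝ) (u : (Fin n → ℂ) → ℂ) : Prop :=
  Differentiable ℂ u ∧ MemL2 Φ u

/-- `P` is the orthogonal projection of `L²(ℂⁿ, e^{-2Φ}L(dx))` onto `H_Φ(ℂⁿ)`. -/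
def IsBargmannProj (Φ : (Fin n → ℂ) → ℝ)
    (P : ((Fin n → ℂ) → ℂ) → ((Fin n → ℂ) → ℂ)) : Prop :=
  ∀ u, MemL2 Φ u →
    MemH Φ (P u) ∧ ∀ v, MemH Φ v → wInner Φ (fun x => u x - P u x) v = 0

/-- Membership in the maximal domain of `Top(e^q) = Π_Φ ∘ e^q ∘ Π_Φ`. -/
def MemDom (Φ : (Fin n → ℂ) → ℝ) (q : (Fin n → ℂ) → ℂ) (u : (Fin n → ℂ) → ℂ) : Prop :=
  MemH Φ u ∧ MemL2 Φ (fun x => Complex.exp (q x) * u x)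

/-- Boundedness of the Toeplitz operator `Top(e^q)` on its maximal domain. -/
def ToeplitzBounded (Φ : (Fin n → ℂ) → ℝ) (q : (Fin n → ℂ) → ℂ)
    (P : ((Fin n → ℂ) → ℂ) → ((Fin n → ℂ) → ℂ)) : Prop :=
  ∃ C : ℝ, 0 ≤ C ∧ ∀ u, MemDom Φ q u →
    Real.sqrt (wNormSq Φ (P fun x => Complex.exp (q x) * u x)) ≤
      C * Real.sqrt (wNormSq Φ u)

/-- The Hermitian part `Φʰᵉʳᵐ(x) = (Φ(x) + Φ(ix))/2`. -/
def herm (Φ : (Fin n → ℂ) → ℝ) (x : Fin n → ℂ) : ℝ :=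
  (Φ x + Φ (Complex.I • x)) / 2

/-! Multiplication by `e^{-f}` is the unitary `𝒰`: since `Φ₀ = Φ₀ʰᵉʳᵐ + Re f`, we have
`|e^{-f}|² e^{-2Φ₀ʰᵉʳᵐ} = e^{-2Φ₀}`, so it is an isometry of the weighted `L²` spaces preserving
inner products, and since `f` is entire it maps holomorphic functions onto holomorphic functions.
Hence it carries `H_{Φ₀}` onto `H_{Φ₀ʰᵉʳᵐ}` and intertwines the orthogonal projections, and it
commutes with multiplication by `e^q`. -/

theorem _root_.QuadraticMap.differentiable {𝕜 E F : Type*} [RCLike 𝕜]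
    [NormedAddCommGroup E] [NormedSpace 𝕜 E] [FiniteDimensional 𝕜 E]
    [NormedAddCommGroup F] [NormedSpace 𝕜 F] (Q : QuadraticMap 𝕜 E F) :
    Differentiable 𝕜 Q := by
  let B := Q.polarBilin.toContinuousBilinearMap
  have hQ : ⇑Q = fun x => (2 : 𝕜)⁻¹ • B x x := by
    ext x
    simp [B, QuadraticMap.polar_self, ← Nat.cast_smul_eq_nsmul 𝕜, smul_smul]
  rw [hQ]
  exact (B.isBoundedBilinearMap.differentiable.comp
    (differentiable_id.prodMk differentiable_id)).const_smul _

section WeightedL2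

variable {Φ : (Fin n → ℂ) → ℝ} {u v : (Fin n → ℂ) → ℂ}

theorem MemL2.integrable_mul_conj (hΦ : Measurable Φ) (hu : MemL2 Φ u) (hv : MemL2 Φ v)
    (hu' : AEStronglyMeasurable u) (hv' : AEStronglyMeasurable v) :
    Integrable (fun x => u x * (starRingEnd ℂ) (v x) * (Real.exp (-2 * Φ x) : ℂ)) := by
  refine ((hu.add hv).div_const 2).mono' ?_ (ae_of_all _ fun x => ?_)
  · exact (hu'.mul hv'.star).mul (by fun_prop : Measurable _).aestronglyMeasurable
  · have he := (Real.exp_pos (-2 * Φ x)).le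
    rw [norm_mul, norm_mul, RCLike.norm_conj, Complex.norm_real, Real.norm_of_nonneg he]
    dsimp only [Pi.add_apply]
    nlinarith [two_mul_le_add_sq ‖u x‖ ‖v x‖]

theorem MemL2.sub (hΦ : Measurable Φ) (hu : MemL2 Φ u) (hv : MemL2 Φ v)
    (hu' : AEStronglyMeasurable u) (hv' : AEStronglyMeasurable v) :
    MemL2 Φ (fun x => u x - v x) := by
  refine ((hu.const_mul 2).add (hv.const_mul 2)).mono' ?_ (ae_of_all _ fun x => ?_)
  · exact ((hu'.sub hv').norm.pow 2).mul (by fun_prop : Measurable _).aestronglyMeasurable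
  · have he := (Real.exp_pos (-2 * Φ x)).le
    have hsub : ‖u x - v x‖ ^ 2 ≤ 2 * ‖u x‖ ^ 2 + 2 * ‖v x‖ ^ 2 := by
      nlinarith [norm_sub_le (u x) (v x), norm_nonneg (u x - v x),
        two_mul_le_add_sq ‖u x‖ ‖v x‖]
    rw [Real.norm_of_nonneg (by positivity)]
    dsimp only [Pi.add_apply]
    nlinarith [mul_le_mul_of_nonneg_right hsub he]

theorem wInner_self (Φ : (Fin n → ℂ) → ℝ) (u : (Fin n → ℂ) → ℂ) :
    wInner Φ u u = (wNormSq Φ u : ℂ) := by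
  rw [wInner, wNormSq, ← integral_complex_ofReal]
  congr 1 with x
  rw [Complex.mul_conj, Complex.normSq_eq_norm_sq]
  push_cast
  ring

theorem eq_zero_of_wNormSq_eq_zero (hu : Continuous u) (hL : MemL2 Φ u)
    (h0 : wNormSq Φ u = 0) : u = 0 := by
  have hae : (fun x => ‖u x‖ ^ 2 * Real.exp (-2 * Φ x)) =ᵐ[volume] 0 :=
    (integral_eq_zero_iff_of_nonneg (fun x => by positivity) hL).1 h0
  refine (hu.ae_eq_iff_eq volume continuous_const).1 ?_
  filter_upwards [hae] with x hx
  show u x = 0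
  simpa [(Real.exp_pos _).ne'] using hx

theorem IsBargmannProj.apply_eq {P : ((Fin n → ℂ) → ℂ) → ((Fin n → ℂ) → ℂ)}
    (hΦ : Measurable Φ) (hP : IsBargmannProj Φ P) {w : (Fin n → ℂ) → ℂ} (hw : MemL2 Φ w)
    (hw' : AEStronglyMeasurable w) (hv : MemH Φ v)
    (horth : ∀ h, MemH Φ h → wInner Φ (fun x => w x - v x) h = 0) : P w = v := by
  obtain ⟨hPw, hPorth⟩ := hP w hw
  have hPw' := hPw.1.continuous.aestronglyMeasurable (μ := volume)
  have hv' := hv.1.continuous.aestronglyMeasurable (μ := volume)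
  have hd : MemH Φ (fun x => P w x - v x) := ⟨hPw.1.sub hv.1, hPw.2.sub hΦ hv.2 hPw' hv'⟩
  have hd' := hd.1.continuous.aestronglyMeasurable (μ := volume)
  have hself : wInner Φ (fun x => P w x - v x) (fun x => P w x - v x) = 0 := by
    have hsplit : wInner Φ (fun x => P w x - v x) (fun x => P w x - v x) =
        wInner Φ (fun x => w x - v x) (fun x => P w x - v x) -
          wInner Φ (fun x => w x - P w x) (fun x => P w x - v x) := by
      rw [wInner, wInner, wInner, ← integral_sub
        ((hw.sub hΦ hv.2 hw' hv').integrable_mul_conj hΦ hd.2 (hw'.sub hv') hd')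
        ((hw.sub hΦ hPw.2 hw' hPw').integrable_mul_conj hΦ hd.2 (hw'.sub hPw') hd')]
      congr 1 with x
      ring
    rw [hsplit, horth _ hd, hPorth _ hd, sub_zero]
  rw [wInner_self, Complex.ofReal_eq_zero] at hself
  funext x
  exact sub_eq_zero.1 (congrFun (eq_zero_of_wNormSq_eq_zero hd.1.continuous hd.2 hself) x)

end WeightedL2

section Conjugation

variable {Φ Ψ : (Fin n → ℂ) → ℝ} {g : (Fin n → ℂ) → ℂ}

theorem exp_neg_mul_exp_mul (g u : (Fin n → ℂ) → ℂ) :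
    (fun x => Complex.exp (-g x) * (Complex.exp (g x) * u x)) = u := by
  funext x
  rw [← mul_assoc, ← Complex.exp_add, neg_add_cancel, Complex.exp_zero, one_mul]

theorem exp_neg_mul_weight (hg : ∀ x, Φ x = Ψ x + (g x).re) (x : Fin n → ℂ) :
    ‖Complex.exp (-g x)‖ ^ 2 * Real.exp (-2 * Ψ x) = Real.exp (-2 * Φ x) := by
  rw [Complex.norm_exp, Complex.neg_re, ← Real.exp_nat_mul, ← Real.exp_add, hg]
  ring_nf

theorem norm_exp_neg_mul_sq_mul_weight (hg : ∀ x, Φ x = Ψ x + (g x).re)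
    (u : (Fin n → ℂ) → ℂ) (x : Fin n → ℂ) :
    ‖Complex.exp (-g x) * u x‖ ^ 2 * Real.exp (-2 * Ψ x) = ‖u x‖ ^ 2 * Real.exp (-2 * Φ x) := by
  rw [norm_mul, mul_pow, mul_right_comm, mul_comm, exp_neg_mul_weight hg]

theorem memL2_exp_neg_mul_iff (hg : ∀ x, Φ x = Ψ x + (g x).re) (u : (Fin n → ℂ) → ℂ) :
    MemL2 Ψ (fun x => Complex.exp (-g x) * u x) ↔ MemL2 Φ u := by
  simp only [MemL2, norm_exp_neg_mul_sq_mul_weight hg]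

theorem wNormSq_exp_neg_mul (hg : ∀ x, Φ x = Ψ x + (g x).re) (u : (Fin n → ℂ) → ℂ) :
    wNormSq Ψ (fun x => Complex.exp (-g x) * u x) = wNormSq Φ u := by
  simp only [wNormSq, norm_exp_neg_mul_sq_mul_weight hg]

theorem wInner_exp_neg_mul (hg : ∀ x, Φ x = Ψ x + (g x).re) (u v : (Fin n → ℂ) → ℂ) :
    wInner Ψ (fun x => Complex.exp (-g x) * u x) (fun x => Complex.exp (-g x) * v x) =
      wInner Φ u v := by
  unfold wInner
  congr 1 with x
  calc Complex.exp (-g x) * u x * (starRingEnd ℂ) (Complex.exp (-g x) * v x)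
        * (Real.exp (-2 * Ψ x) : ℂ)
      = u x * (starRingEnd ℂ) (v x) *
          (Complex.exp (-g x) * (starRingEnd ℂ) (Complex.exp (-g x)) *
            (Real.exp (-2 * Ψ x) : ℂ)) := by rw [map_mul]; ring
    _ = u x * (starRingEnd ℂ) (v x) * (Real.exp (-2 * Φ x) : ℂ) := by
      rw [Complex.mul_conj, Complex.normSq_eq_norm_sq, ← exp_neg_mul_weight hg x]
      push_cast
      ring

theorem memH_exp_neg_mul_iff (hg : ∀ x, Φ x = Ψ x + (g x).re) (hg' : Differentiable ℂ g)
    (u : (Fin n → ℂ) → ℂ) :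
    MemH Ψ (fun x => Complex.exp (-g x) * u x) ↔ MemH Φ u := by
  refine and_congr ⟨fun hd => ?_, hg'.neg.cexp.mul⟩ (memL2_exp_neg_mul_iff hg u)
  have h : Differentiable ℂ fun x => Complex.exp (g x) * (Complex.exp (-g x) * u x) :=
    hg'.cexp.mul hd
  simpa only [← mul_assoc, ← Complex.exp_add, add_neg_cancel, Complex.exp_zero, one_mul] using h

theorem memDom_exp_neg_mul_iff (hg : ∀ x, Φ x = Ψ x + (g x).re) (hg' : Differentiable ℂ g)
    (q u : (Fin n → ℂ) → ℂ) :
    MemDom Ψ q (fun x => Complex.exp (-g x) * u x) ↔ MemDom Φ q u := by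
  simp only [MemDom, mul_left_comm (Complex.exp (q _)), memH_exp_neg_mul_iff hg hg',
    memL2_exp_neg_mul_iff hg]

theorem IsBargmannProj.apply_exp_neg_mul (hg : ∀ x, Φ x = Ψ x + (g x).re)
    (hg' : Differentiable ℂ g) (hΨ : Measurable Ψ)
    {P₀ Ph : ((Fin n → ℂ) → ℂ) → ((Fin n → ℂ) → ℂ)}
    (hP₀ : IsBargmannProj Φ P₀) (hPh : IsBargmannProj Ψ Ph)
    {w : (Fin n → ℂ) → ℂ} (hw : MemL2 Φ w) (hw' : AEStronglyMeasurable w) :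
    Ph (fun x => Complex.exp (-g x) * w x) = fun x => Complex.exp (-g x) * P₀ w x := by
  obtain ⟨hP₀w, hP₀orth⟩ := hP₀ w hw
  refine hPh.apply_eq hΨ ((memL2_exp_neg_mul_iff hg w).2 hw)
    (hg'.neg.cexp.continuous.aestronglyMeasurable.mul hw')
    ((memH_exp_neg_mul_iff hg hg' _).2 hP₀w) fun h hh => ?_
  rw [← exp_neg_mul_exp_mul g h] at hh ⊢
  simp only [← mul_sub]
  rw [wInner_exp_neg_mul hg]
  exact hP₀orth _ ((memH_exp_neg_mul_iff hg hg' _).1 hh)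

theorem toeplitzBounded_iff_of_exp_neg_mul (hg : ∀ x, Φ x = Ψ x + (g x).re)
    {q : (Fin n → ℂ) → ℂ} {P₀ Ph : ((Fin n → ℂ) → ℂ) → ((Fin n → ℂ) → ℂ)}
    (hdom : ∀ u, MemDom Φ q u ↔ MemDom Ψ q (fun x => Complex.exp (-g x) * u x))
    (hconj : ∀ u, MemDom Φ q u →
      Ph (fun y => Complex.exp (q y) * (Complex.exp (-g y) * u y)) =
        fun x => Complex.exp (-g x) * P₀ (fun y => Complex.exp (q y) * u y) x) :
    ToeplitzBounded Φ q P₀ ↔ ToeplitzBounded Ψ q Ph := by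
  have hbound : ∀ C u, MemDom Φ q u →
      (Real.sqrt (wNormSq Φ (P₀ fun x => Complex.exp (q x) * u x)) ≤
          C * Real.sqrt (wNormSq Φ u) ↔
        Real.sqrt (wNormSq Ψ (Ph fun x => Complex.exp (q x) *
            (Complex.exp (-g x) * u x))) ≤
          C * Real.sqrt (wNormSq Ψ fun x => Complex.exp (-g x) * u x)) := by
    intro C u hu
    rw [hconj u hu, wNormSq_exp_neg_mul hg, wNormSq_exp_neg_mul hg]
  have hsurj : ∀ u', u' = fun x => Complex.exp (-g x) * (Complex.exp (g x) * u' x) :=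
    fun u' => (exp_neg_mul_exp_mul g u').symm
  refine exists_congr fun C => and_congr_right fun _ => ⟨fun h u' hu' => ?_, fun h u hu => ?_⟩
  · rw [hsurj u'] at hu' ⊢
    exact (hbound C _ ((hdom _).2 hu')).1 (h _ ((hdom _).2 hu'))
  · exact (hbound C u hu).2 (h _ ((hdom u).1 hu))

end Conjugation

theorem statement14_general
    (Φ₀ : QuadraticForm ℝ (Fin n → ℂ))
    (f : QuadraticMap ℂ (Fin n → ℂ) ℂ)
    (hf : ∀ x, Φ₀ x = herm (fun y => Φ₀ y) x + (f x).re)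
    (q₂ : QuadraticMap ℝ (Fin n → ℂ) ℂ) (q₁ : (Fin n → ℂ) →ₗ[ℝ] ℂ) (q₀ : ℂ)
    (q : (Fin n → ℂ) → ℂ) (hq : ∀ x, q x = q₂ x + q₁ x + q₀)
    (P₀ Ph : ((Fin n → ℂ) → ℂ) → ((Fin n → ℂ) → ℂ))
    (hP₀ : IsBargmannProj (fun y => Φ₀ y) P₀)
    (hPh : IsBargmannProj (herm fun y => Φ₀ y) Ph) :
    -- `𝒰` maps the maximal domain of `Top(e^q)` bijectively onto that over `Φ₀ʰᵉʳᵐ`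
    (∀ u : (Fin n → ℂ) → ℂ, MemDom (fun y => Φ₀ y) q u ↔
      MemDom (herm fun y => Φ₀ y) q (fun x => Complex.exp (-f x) * u x)) ∧
    -- `Π_{Φ₀ʰᵉʳᵐ} ∘ e^q ∘ Π_{Φ₀ʰᵉʳᵐ} = 𝒰 ∘ Top(e^q) ∘ 𝒰⁻¹` on that domain
    (∀ u : (Fin n → ℂ) → ℂ, MemDom (fun y => Φ₀ y) q u → ∀ x,
      Ph (fun y => Complex.exp (q y) * (Complex.exp (-f y) * u y)) x
        = Complex.exp (-f x) * P₀ (fun y => Complex.exp (q y) * u y) x) ∧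
    -- consequently the two Toeplitz operators are simultaneously bounded
    (ToeplitzBounded (fun y => Φ₀ y) q P₀ ↔
      ToeplitzBounded (herm fun y => Φ₀ y) q Ph) := by
  have hf' : Differentiable ℂ fun x => f x := f.differentiable
  have hΦ₀ : Continuous fun x => Φ₀ x := Φ₀.differentiable.continuous
  have hherm : Measurable (herm fun y => Φ₀ y) :=
    ((hΦ₀.add (hΦ₀.comp (continuous_const_smul Complex.I))).div_const 2).measurable
  have hqc : Continuous q := by
    rw [funext hq]
    exact (q₂.differentiable.continuous.add q₁.continuous_of_finiteDimensional).add
      continuous_const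
  have hdom : ∀ u, MemDom (fun y => Φ₀ y) q u ↔
      MemDom (herm fun y => Φ₀ y) q (fun x => Complex.exp (-f x) * u x) :=
    fun u => (memDom_exp_neg_mul_iff hf hf' q u).symm
  have hconj : ∀ u, MemDom (fun y => Φ₀ y) q u →
      Ph (fun y => Complex.exp (q y) * (Complex.exp (-f y) * u y)) =
        fun x => Complex.exp (-f x) * P₀ (fun y => Complex.exp (q y) * u y) x := by
    intro u hu
    simp only [mul_left_comm (Complex.exp (q _))]
    exact hP₀.apply_exp_neg_mul hf hf' hherm hPh hu.2
      ((Complex.continuous_exp.comp hqc).mul hu.1.1.continuous).aestronglyMeasurable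
  exact ⟨hdom, fun u hu => congrFun (hconj u hu),
    toeplitzBounded_iff_of_exp_neg_mul hf hdom hconj⟩

/-- the reduction step of Section 2 of the paper.  With `Φ₀` strictly
plurisubharmonic, `Φ₀ = Φ₀ʰᵉʳᵐ + Re f`, `𝒰u = e^{-f}u`, and `q` an inhomogeneous quadratic
polynomial: `Π_{Φ₀ʰᵉʳᵐ} ∘ e^q ∘ Π_{Φ₀ʰᵉʳᵐ} = 𝒰 ∘ Top(e^q) ∘ 𝒰⁻¹` as densely defined
operators, `𝒰` maps the maximal domain of `Top(e^q)` bijectively onto that of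
`Π_{Φ₀ʰᵉʳᵐ} ∘ e^q ∘ Π_{Φ₀ʰᵉʳᵐ}`, and `Top(e^q)` is bounded on `H_{Φ₀}(ℂⁿ)` iff
`Π_{Φ₀ʰᵉʳᵐ} ∘ e^q ∘ Π_{Φ₀ʰᵉʳᵐ}` is bounded on `H_{Φ₀ʰᵉʳᵐ}(ℂⁿ)`. -/
theorem statement14
    (Φ₀ : QuadraticForm ℝ (Fin n → ℂ))
    (hpsh : ∀ x : Fin n → ℂ, x ≠ 0 → 0 < herm (fun y => Φ₀ y) x)
    (f : QuadraticMap ℂ (Fin n → ℂ) ℂ)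
    (hf : ∀ x, Φ₀ x = herm (fun y => Φ₀ y) x + (f x).re)
    (q₂ : QuadraticMap ℝ (Fin n → ℂ) ℂ) (q₁ : (Fin n → ℂ) →ₗ[ℝ] ℂ) (q₀ : ℂ)
    (q : (Fin n → ℂ) → ℂ) (hq : ∀ x, q x = q₂ x + q₁ x + q₀)
    (P₀ Ph : ((Fin n → ℂ) → ℂ) → ((Fin n → ℂ) → ℂ))
    (hP₀ : IsBargmannProj (fun y => Φ₀ y) P₀)
    (hPh : IsBargmannProj (herm fun y => Φ₀ y) Ph) :
    -- `𝒰` maps the maximal domain of `Top(e^q)` bijectively onto that over `Φ₀ʰᵉʳᵐ`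
    (∀ u : (Fin n → ℂ) → ℂ, MemDom (fun y => Φ₀ y) q u ↔
      MemDom (herm fun y => Φ₀ y) q (fun x => Complex.exp (-f x) * u x)) ∧
    -- `Π_{Φ₀ʰᵉʳᵐ} ∘ e^q ∘ Π_{Φ₀ʰᵉʳᵐ} = 𝒰 ∘ Top(e^q) ∘ 𝒰⁻¹` on that domain
    (∀ u : (Fin n → ℂ) → ℂ, MemDom (fun y => Φ₀ y) q u → ∀ x,
      Ph (fun y => Complex.exp (q y) * (Complex.exp (-f y) * u y)) x
        = Complex.exp (-f x) * P₀ (fun y => Complex.exp (q y) * u y) x) ∧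
    -- consequently the two Toeplitz operators are simultaneously bounded
    (ToeplitzBounded (fun y => Φ₀ y) q P₀ ↔
      ToeplitzBounded (herm fun y => Φ₀ y) q Ph) :=
  statement14_general Φ₀ f hf q₂ q₁ q₀ q hq P₀ Ph hP₀ hPh

end BergerCoburn
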